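/- arXiv:2111.11132 — 4 statements merged into one kernel-verified Lean document; each statement's English description precedes it below -/
import Mathlib

section
/- Let q be an odd prime power, c ∈ F_q^*, and f(X) = c(X^{q+1} - X^2) on F_{q^2}. For every α ∈ F_{q^2} \ F_q, the preimage f^{-1}(α) has either 0 or 2 elements. -/
/-!
Write `φ x = x ^ q`, the involutive Frobenius of `F_{q^2}/F_q`, so that
`f x = c x (φ x - x)`. Applying `φ` gives `α + φ α = -c (φ x - x) ^ 2` for `α = f x`, so a
preimage `x` of `α` determines `φ x - x` up to sign; since `α ≠ 0` this difference is nonzero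
and `x = α / (c (φ x - x))` is determined up to sign too. Conversely `f (-x) = f x`, and
`x ≠ -x` because the characteristic is odd.
-/

theorem FiniteField.exists_ringHom_eq_pow_of_dvd_card {K : Type*} [Field K] [Fintype K] {q : ℕ}
    (hq : q ∣ Fintype.card K) : ∃ φ : K →+* K, ∀ x, φ x = x ^ q := by
  obtain ⟨p, hchar, n, hp, hn⟩ := FiniteField.card' K
  obtain ⟨k, -, rfl⟩ := (Nat.dvd_prime_pow hp).mp (hn ▸ hq)
  have := Fact.mk hp
  exact ⟨iterateFrobenius K p k, fun _ => rfl⟩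

section Involution

variable {K : Type*} [Field K] (φ : K →+* K) {c : K}

theorem add_map_mul_mul_sub_eq (hφ : ∀ x, φ (φ x) = x) (hc : φ c = c) (x : K) :
    c * (x * (φ x - x)) + φ (c * (x * (φ x - x))) = -(c * (φ x - x) ^ 2) := by
  simp only [map_mul, map_sub, hφ, hc]
  ring

theorem eq_or_eq_neg_of_mul_mul_sub_eq (hφ : ∀ x, φ (φ x) = x) (hc : φ c = c) {x y : K}
    (hx : c * (x * (φ x - x)) ≠ 0) (h : c * (y * (φ y - y)) = c * (x * (φ x - x))) :
    y = x ∨ y = -x := by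
  have hcx : c * (φ x - x) ≠ 0 := fun h0 => hx (by linear_combination x * h0)
  have hsq : c * (φ y - y) ^ 2 = c * (φ x - x) ^ 2 := by
    have := add_map_mul_mul_sub_eq φ hφ hc y
    rw [h, add_map_mul_mul_sub_eq φ hφ hc x] at this
    exact neg_injective this.symm
  have hc0 : c ≠ 0 := left_ne_zero_of_mul hcx
  rcases sq_eq_sq_iff_eq_or_eq_neg.mp (mul_left_cancel₀ hc0 hsq) with hd | hd
  · refine .inl (mul_left_cancel₀ hcx ?_)
    linear_combination h - c * y * hd
  · refine .inr (mul_left_cancel₀ hcx ?_)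
    linear_combination (-1 : K) * h + c * y * hd

theorem ncard_mul_mul_sub_eq_zero_or_two (hφ : ∀ x, φ (φ x) = x) (hc : φ c = c)
    (h2 : (2 : K) ≠ 0) {α : K} (hα : φ α ≠ α) :
    {x : K | c * (x * (φ x - x)) = α}.ncard = 0 ∨
      {x : K | c * (x * (φ x - x)) = α}.ncard = 2 := by
  rcases Set.eq_empty_or_nonempty {x : K | c * (x * (φ x - x)) = α} with
    he | ⟨x, hx : c * (x * (φ x - x)) = α⟩
  · exact .inl (by rw [he, Set.ncard_empty])
  refine .inr ?_
  have hα0 : α ≠ 0 := fun h0 => hα (by rw [h0, map_zero])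
  have hx0 : x ≠ 0 := by rintro rfl; simp [eq_comm, hα0] at hx
  have hfiber : {x : K | c * (x * (φ x - x)) = α} = {x, -x} := by
    ext y
    constructor
    · intro hy
      exact eq_or_eq_neg_of_mul_mul_sub_eq φ hφ hc (hx.trans_ne hα0) (hy.trans hx.symm)
    · rintro (rfl | rfl)
      · exact hx
      · change c * (-x * (φ (-x) - -x)) = α
        rw [map_neg]
        linear_combination hx
  rw [hfiber, Set.ncard_pair]
  exact fun h => hx0 (by simpa [h2] using (by linear_combination h : (2 : K) * x = 0))

end Involution

theorem stmt_4_general (q : ℕ) (hq : Odd q) (K : Type*) [Field K] [Fintype K]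
    (hK : Fintype.card K = q ^ 2)
    (c : K) (hcF : c ^ q = c)
    (α : K) (hα : α ^ q ≠ α) :
    Set.ncard {x : K | c * (x ^ (q + 1) - x ^ 2) = α} = 0 ∨
    Set.ncard {x : K | c * (x ^ (q + 1) - x ^ 2) = α} = 2 := by
  obtain ⟨φ, hφ⟩ :=
    FiniteField.exists_ringHom_eq_pow_of_dvd_card (hK ▸ dvd_pow_self q two_ne_zero)
  have hinv : ∀ x, φ (φ x) = x := fun x => by
    rw [hφ, hφ, ← pow_mul, ← sq, ← hK, FiniteField.pow_card]
  have h2 : (2 : K) ≠ 0 := Ring.two_ne_zero fun h =>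
    by simpa [hK, Nat.odd_iff.mp hq.pow] using FiniteField.even_card_iff_char_two.mp h
  have hf : ∀ x : K, x ^ (q + 1) - x ^ 2 = x * (φ x - x) := fun x => by rw [hφ]; ring
  simp only [hf]
  exact ncard_mul_mul_sub_eq_zero_or_two φ hinv (by rwa [hφ]) h2 (by rwa [hφ])

/-- for α ∈ F_{q^2} \ F_q, the preimage f^{-1}(α) has 0 or 2 elements. -/
theorem stmt_4 (q : ℕ) (hq : Odd q) (K : Type*) [Field K] [Fintype K]
    (hK : Fintype.card K = q ^ 2)
    (c : K) (hcF : c ^ q = c) (hc0 : c ≠ 0)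
    (α : K) (hα : α ^ q ≠ α) :
    Set.ncard {x : K | c * (x ^ (q + 1) - x ^ 2) = α} = 0 ∨
    Set.ncard {x : K | c * (x ^ (q + 1) - x ^ 2) = α} = 2 :=
  stmt_4_general q hq K hK c hcF α hα
end

section
/- Let q be odd with q - 1 = 2^s r, r odd, c ∈ F_q^*, and f(X) = c(X^{q+1} + X^2) on F_{q^2}. For every divisor d > 1 of r, there are exactly q·φ(d)/ord_d(2) cycles of f of length ord_d(2) attached to elements θ = 2cx of order d; every cycle of length greater than 1 arises this way. For d = 1 there are q + 1 fixed points. -/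
/-!
Put θ(x) = c(x + x^q). Since θ takes values in `F_q`, we have f(x) = x·θ(x) and θ(f x) = θ(x)²,
hence fⁿ(x) = x·θ(x)^(2ⁿ - 1). For x ≠ 0 the exact period of x is therefore the order of 2 modulo
d = ord θ(x); when it exceeds 1, d is odd, d > 1, and d ∣ q - 1. Counting then reduces to the fibres
of θ: the trace x ↦ x + x^q maps `F_{q²}` onto `F_q` with all fibres of size q (kernel and image
lie in zero sets of degree-q polynomials, and their sizes multiply to q²), while `F_q^*` has
φ(d) elements of each order d ∣ q - 1.
-/

open Finset Function Polynomial
open scoped Classical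

section Dynamics

variable {M : Type*}

theorem iterate_eq_mul_pow_two_pow_sub_one [CommMonoid M] {f θ : M → M}
    (hf : ∀ x, f x = x * θ x) (hθ : ∀ x, θ (f x) = θ x ^ 2) (n : ℕ) (x : M) :
    f^[n] x = x * θ x ^ (2 ^ n - 1) := by
  induction n generalizing x with
  | zero => simp
  | succ n ih =>
    have hexp : 2 * (2 ^ n - 1) + 1 = 2 ^ (n + 1) - 1 := by
      have := Nat.one_le_two_pow (n := n)
      rw [pow_succ]
      omega
    rw [iterate_succ_apply, ih, hθ, hf, mul_assoc, ← pow_mul, ← pow_succ', hexp]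

theorem orderOf_two_zmod_dvd_iff (d n : ℕ) : orderOf (2 : ZMod d) ∣ n ↔ d ∣ 2 ^ n - 1 := by
  rw [orderOf_dvd_iff_pow_eq_one, ← ZMod.natCast_eq_zero_iff, Nat.cast_sub Nat.one_le_two_pow,
    Nat.cast_pow, Nat.cast_ofNat, Nat.cast_one, sub_eq_zero]

theorem odd_of_orderOf_two_zmod_pos {d : ℕ} (h : 0 < orderOf (2 : ZMod d)) : Odd d := by
  have hdvd := (orderOf_two_zmod_dvd_iff d _).mp dvd_rfl
  exact Odd.of_dvd_nat (Nat.Even.sub_odd Nat.one_le_two_pow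
    (Nat.even_pow.mpr ⟨even_two, h.ne'⟩) odd_one) hdvd

theorem isPeriodicPt_iff_orderOf_two_dvd [CommMonoidWithZero M] [IsCancelMulZero M]
    {f θ : M → M} (hf : ∀ x, f x = x * θ x) (hθ : ∀ x, θ (f x) = θ x ^ 2) {x : M} (hx : x ≠ 0)
    (n : ℕ) :
    IsPeriodicPt f n x ↔ orderOf (2 : ZMod (orderOf (θ x))) ∣ n := by
  rw [IsPeriodicPt, IsFixedPt, iterate_eq_mul_pow_two_pow_sub_one hf hθ, mul_eq_left₀ hx,
    ← orderOf_dvd_iff_pow_eq_one, orderOf_two_zmod_dvd_iff]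

theorem minimalPeriod_eq_orderOf_two [CommMonoidWithZero M] [IsCancelMulZero M]
    {f θ : M → M} (hf : ∀ x, f x = x * θ x) (hθ : ∀ x, θ (f x) = θ x ^ 2) {x : M} (hx : x ≠ 0) :
    minimalPeriod f x = orderOf (2 : ZMod (orderOf (θ x))) :=
  Nat.dvd_antisymm ((isPeriodicPt_iff_orderOf_two_dvd hf hθ hx _).mpr dvd_rfl).minimalPeriod_dvd
    ((isPeriodicPt_iff_orderOf_two_dvd hf hθ hx _).mp (isPeriodicPt_minimalPeriod f x))

theorem orderOf_dvd_sub_one_of_pow_eq_self [MonoidWithZero M] [IsCancelMulZero M] {t : M}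
    {q : ℕ} (hq : 0 < q) (ht : t ^ q = t) (ht0 : t ≠ 0) : orderOf t ∣ q - 1 := by
  refine orderOf_dvd_of_pow_eq_one (mul_right_cancel₀ ht0 ?_)
  rw [← pow_succ, Nat.sub_add_cancel hq, ht, one_mul]

theorem pow_eq_self_of_orderOf_dvd_sub_one [Monoid M] {t : M} {q : ℕ}
    (hq : 0 < q) (ht : orderOf t ∣ q - 1) : t ^ q = t := by
  rw [← Nat.sub_add_cancel hq, pow_succ, orderOf_dvd_iff_pow_eq_one.mp ht, one_mul]

theorem ne_zero_of_odd_orderOf [MonoidWithZero M] [Nontrivial M] {t : M}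
    (h : Odd (orderOf t)) : t ≠ 0 := by
  rintro rfl
  rw [orderOf_zero] at h
  exact Nat.not_odd_zero h

theorem orderOf_spec_of_one_lt_minimalPeriod [CommMonoidWithZero M] [IsCancelMulZero M]
    [Nontrivial M] {f θ : M → M} {q : ℕ} (hf : ∀ x, f x = x * θ x)
    (hθ : ∀ x, θ (f x) = θ x ^ 2) (hθq : ∀ x, θ x ^ q = θ x) (hq : 0 < q) {x : M}
    (h : 1 < minimalPeriod f x) :
    orderOf (θ x) ∣ q - 1 ∧ Odd (orderOf (θ x)) ∧ 1 < orderOf (θ x) ∧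
      minimalPeriod f x = orderOf (2 : ZMod (orderOf (θ x))) := by
  have hx : x ≠ 0 := by
    rintro rfl
    rw [minimalPeriod_eq_one_iff_isFixedPt.mpr (by rw [IsFixedPt, hf, zero_mul])] at h
    exact lt_irrefl 1 h
  have hper := minimalPeriod_eq_orderOf_two hf hθ hx
  have hodd : Odd (orderOf (θ x)) := odd_of_orderOf_two_zmod_pos (by omega)
  have hne_one : orderOf (θ x) ≠ 1 := fun h1 => by
    rw [hper, h1, orderOf_eq_one_iff.mpr (Subsingleton.elim _ _)] at h
    exact lt_irrefl 1 h
  refine ⟨orderOf_dvd_sub_one_of_pow_eq_self hq (hθq x) (ne_zero_of_odd_orderOf hodd), hodd,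
    ?_, hper⟩
  have := hodd.pos
  omega

theorem minimalPeriod_eq_iff_orderOf_mem [CommMonoidWithZero M] [IsCancelMulZero M]
    [Nontrivial M] {f θ : M → M} {q n : ℕ} (hf : ∀ x, f x = x * θ x)
    (hθ : ∀ x, θ (f x) = θ x ^ 2) (hθq : ∀ x, θ x ^ q = θ x) (hθ0 : θ 0 = 0) (hq : 1 < q)
    (hn : 1 < n) (x : M) :
    minimalPeriod f x = n ↔
      orderOf (θ x) ∈ (q - 1).divisors.filter (fun d => Odd d ∧ orderOf (2 : ZMod d) = n) := by
  simp only [mem_filter, Nat.mem_divisors]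
  constructor
  · rintro rfl
    obtain ⟨hdvd, hodd, -, hper⟩ := orderOf_spec_of_one_lt_minimalPeriod hf hθ hθq (by omega) hn
    exact ⟨⟨hdvd, by omega⟩, hodd, hper.symm⟩
  · rintro ⟨-, hodd, rfl⟩
    have hx : x ≠ 0 := by
      rintro rfl
      exact ne_zero_of_odd_orderOf hodd hθ0
    exact minimalPeriod_eq_orderOf_two hf hθ hx

end Dynamics

section FiniteField

variable {K : Type*} [Field K] [Fintype K] {q : ℕ}

theorem add_pow_eq_of_dvd_card (hq : q ∣ Fintype.card K) (x y : K) :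
    (x + y) ^ q = x ^ q + y ^ q := by
  obtain ⟨n, hp, hcard⟩ := FiniteField.card K (ringChar K)
  have := Fact.mk hp
  obtain ⟨k, -, rfl⟩ := (Nat.dvd_prime_pow hp).mp (hcard ▸ hq)
  exact add_pow_char_pow x y _ _

theorem card_filter_pow_eq_mul_le (hq : 2 ≤ q) (a : K) : #{x : K | x ^ q = a * x} ≤ q := by
  have hlt : (C a * X : K[X]).natDegree < (X ^ q : K[X]).natDegree := by
    rw [natDegree_X_pow]
    exact (natDegree_C_mul_le a X).trans_lt (by rw [natDegree_X]; omega)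
  have hdeg : (X ^ q - C a * X : K[X]).natDegree = q := by
    rw [natDegree_sub_eq_left_of_natDegree_lt hlt, natDegree_X_pow]
  have hne : (X ^ q - C a * X : K[X]) ≠ 0 := ne_zero_of_natDegree_gt (n := 0) (by omega)
  refine (card_le_degree_of_subset_roots fun x hx => ?_).trans hdeg.le
  rw [mem_roots hne, IsRoot, eval_sub, eval_mul, eval_pow, eval_C, eval_X, sub_eq_zero]
  exact (mem_filter.mp hx).2

theorem card_filter_orderOf_eq_totient {d : ℕ} (hd : d ∣ Fintype.card K - 1) :
    #{x : K | orderOf x = d} = Nat.totient d := by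
  rw [← IsCyclic.card_orderOf_eq_totient (α := Kˣ) (by rwa [Fintype.card_units])]
  refine (card_bij (fun (u : Kˣ) _ => (u : K)) (fun u hu => ?_) (fun u _ v _ h => Units.ext h)
    (fun x hx => ?_)).symm
  · simpa [orderOf_units] using hu
  · have hx0 : x ≠ 0 := by
      rintro rfl
      simp only [mem_filter, mem_univ, true_and, orderOf_zero] at hx
      have := Fintype.one_lt_card (α := K)
      rw [← hx, zero_dvd_iff] at hd
      omega
    exact ⟨Units.mk0 x hx0, by simpa [← orderOf_units] using hx, rfl⟩

end FiniteField

section ScaledTrace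

variable {K : Type*} [Field K] [Fintype K] {q : ℕ}

def scaledTrace (q : ℕ) (c x : K) : K := c * (x + x ^ q)

theorem two_le_of_card_eq_sq (hK : Fintype.card K = q ^ 2) : 2 ≤ q := by
  have := Fintype.one_lt_card (α := K)
  rw [hK] at this
  by_contra! h
  interval_cases q <;> simp at this

theorem pow_pow_eq_self_of_card_eq_sq (hK : Fintype.card K = q ^ 2) (x : K) :
    (x ^ q) ^ q = x := by
  rw [← pow_mul, ← sq, ← hK, FiniteField.pow_card]

theorem card_filter_add_pow_eq (hK : Fintype.card K = q ^ 2) {y : K} (hy : y ^ q = y) :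
    #{x : K | x + x ^ q = y} = q := by
  have hq := two_le_of_card_eq_sq hK
  have hadd := add_pow_eq_of_dvd_card (K := K) (hK ▸ dvd_pow_self q two_ne_zero)
  let T : K →+ K := AddMonoidHom.mk' (fun x => x + x ^ q) fun x y => by rw [hadd]; ring
  have hfiber : ∀ z ∈ univ.image T, #{x | T x = z} = #{x | T x = 0} := fun z hz =>
    AddMonoidHom.card_fiber_eq_of_mem_range T (by simpa using hz) ⟨0, map_zero T⟩
  have hker : #{x | T x = 0} ≤ q := by
    refine (card_le_card fun x hx => ?_).trans (card_filter_pow_eq_mul_le hq (-1))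
    simp only [mem_filter, mem_univ, true_and, T, AddMonoidHom.mk'_apply] at hx ⊢
    linear_combination hx
  have himage : univ.image T ⊆ ({z | z ^ q = 1 * z} : Finset K) := by
    intro z hz
    obtain ⟨x, -, rfl⟩ := mem_image.mp hz
    simp only [mem_filter, mem_univ, true_and, T, AddMonoidHom.mk'_apply]
    rw [hadd, pow_pow_eq_self_of_card_eq_sq hK]
    ring
  have hF := card_filter_pow_eq_mul_le hq (1 : K)
  have hprod : q * q = #(univ.image T) * #{x | T x = 0} := by
    rw [← sq, ← hK, ← card_univ, card_eq_sum_card_image T univ, sum_congr rfl hfiber, sum_const,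
      smul_eq_mul]
  have hcard_image : #(univ.image T) = q := by
    nlinarith [card_le_card himage]
  have hy_mem : y ∈ univ.image T := by
    rw [eq_of_subset_of_card_le himage (hcard_image ▸ hF)]
    simpa using hy
  rw [← hfiber y hy_mem, hcard_image] at hprod
  exact (Nat.eq_of_mul_eq_mul_left (by omega) hprod).symm

theorem scaledTrace_pow (hK : Fintype.card K = q ^ 2) {c : K} (hc : c ^ q = c) (x : K) :
    scaledTrace q c x ^ q = scaledTrace q c x := by
  rw [scaledTrace, mul_pow, hc, add_pow_eq_of_dvd_card (hK ▸ dvd_pow_self q two_ne_zero),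
    pow_pow_eq_self_of_card_eq_sq hK, add_comm (x ^ q)]

omit [Fintype K] in
theorem scaledTrace_mul_of_pow_eq (c x : K) {t : K} (ht : t ^ q = t) :
    scaledTrace q c (x * t) = t * scaledTrace q c x := by
  rw [scaledTrace, scaledTrace, mul_pow, ht]
  ring

omit [Fintype K] in
theorem scaledTrace_zero (hq : q ≠ 0) (c : K) : scaledTrace q c 0 = 0 := by
  rw [scaledTrace, zero_pow hq, add_zero, mul_zero]

omit [Fintype K] in
theorem mul_scaledTrace (c x : K) : x * scaledTrace q c x = c * (x ^ (q + 1) + x ^ 2) := by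
  rw [scaledTrace]
  ring

theorem card_filter_scaledTrace_mem (hK : Fintype.card K = q ^ 2) {c : K} (hc : c ^ q = c)
    (hc0 : c ≠ 0) (S : Finset K) (hS : ∀ y ∈ S, y ^ q = y) :
    #{x | scaledTrace q c x ∈ S} = q * #S := by
  rw [card_eq_sum_card_fiberwise (s := {x | scaledTrace q c x ∈ S}) (f := scaledTrace q c)
      (t := S) fun x hx => (mem_filter.mp hx).2,
    mul_comm, ← smul_eq_mul, ← sum_const]
  refine sum_congr rfl fun y hy => ?_
  rw [filter_filter]
  refine (congrArg card (filter_congr fun x _ => ?_)).trans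
    (card_filter_add_pow_eq hK (y := c⁻¹ * y) (by rw [mul_pow, inv_pow, hc, hS y hy]))
  rw [eq_inv_mul_iff_mul_eq₀ hc0, ← scaledTrace]
  exact ⟨fun h => h.2, fun h => ⟨h ▸ hy, h⟩⟩

theorem card_filter_orderOf_scaledTrace_mem (hK : Fintype.card K = q ^ 2) {c : K}
    (hc : c ^ q = c) (hc0 : c ≠ 0) (D : Finset ℕ) (hD : ∀ d ∈ D, d ∣ q - 1) :
    #{x | orderOf (scaledTrace q c x) ∈ D} = ∑ d ∈ D, q * Nat.totient d := by
  have hq : 0 < q := by have := two_le_of_card_eq_sq hK; omega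
  rw [card_eq_sum_card_fiberwise (s := {x | orderOf (scaledTrace q c x) ∈ D})
    (f := fun x => orderOf (scaledTrace q c x)) (t := D) fun x hx => (mem_filter.mp hx).2]
  refine sum_congr rfl fun d hd => ?_
  have hdK : d ∣ Fintype.card K - 1 := by
    simpa [hK] using (hD d hd).trans (Nat.sub_dvd_pow_sub_pow q 1 2)
  have hS : ∀ y ∈ ({y | orderOf y = d} : Finset K), y ^ q = y := fun y hy =>
    pow_eq_self_of_orderOf_dvd_sub_one hq ((mem_filter.mp hy).2 ▸ hD d hd)
  rw [← card_filter_orderOf_eq_totient hdK, ← card_filter_scaledTrace_mem hK hc hc0 _ hS,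
    filter_filter]
  refine congrArg card (filter_congr fun x _ => ?_)
  simp only [mem_filter, mem_univ, true_and]
  exact ⟨fun h => h.2, fun h => ⟨h ▸ hd, h⟩⟩

theorem card_filter_mul_scaledTrace_eq_self (hK : Fintype.card K = q ^ 2) {c : K}
    (hc : c ^ q = c) (hc0 : c ≠ 0) : #{x | x * scaledTrace q c x = x} = q + 1 := by
  have hq := two_le_of_card_eq_sq hK
  have hsplit : filter (fun x => x * scaledTrace q c x = x) univ =
      insert 0 (filter (fun x => scaledTrace q c x ∈ ({1} : Finset K)) univ) := by
    ext x
    simp only [mem_filter, mem_univ, true_and, mem_insert, mem_singleton, mul_right_eq_self₀]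
    tauto
  rw [hsplit, card_insert_of_notMem, card_filter_scaledTrace_mem hK hc hc0 _ (by simp),
    card_singleton, mul_one]
  simp [scaledTrace_zero (by omega : q ≠ 0)]

end ScaledTrace

open scoped Classical in
theorem stmt_14_general (q : ℕ)
    (K : Type*) [Field K] [Fintype K] (hK : Fintype.card K = q ^ 2)
    (c : K) (hcF : c ^ q = c) (hc0 : c ≠ 0) :
    (∀ n : ℕ, 1 < n →
      Set.ncard {α : K |
          Function.minimalPeriod (fun X : K => c * (X ^ (q + 1) + X ^ 2)) α = n} =
        ∑ d ∈ (q - 1).divisors.filter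
            (fun d => Odd d ∧ orderOf ((2 : ZMod d)) = n),
          q * Nat.totient d) ∧
    (∀ α : K,
      1 < Function.minimalPeriod (fun X : K => c * (X ^ (q + 1) + X ^ 2)) α →
      ∃ d : ℕ, d ∣ q - 1 ∧ Odd d ∧ 1 < d ∧
        Function.minimalPeriod (fun X : K => c * (X ^ (q + 1) + X ^ 2)) α =
          orderOf ((2 : ZMod d))) ∧
    Set.ncard {α : K | c * (α ^ (q + 1) + α ^ 2) = α} = q + 1 := by
  have hq := two_le_of_card_eq_sq hK
  have hf : ∀ x, c * (x ^ (q + 1) + x ^ 2) = x * scaledTrace q c x :=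
    fun x => (mul_scaledTrace c x).symm
  have hθq := scaledTrace_pow hK hcF
  have hθ : ∀ x, scaledTrace q c (c * (x ^ (q + 1) + x ^ 2)) = scaledTrace q c x ^ 2 := by
    intro x
    rw [hf, scaledTrace_mul_of_pow_eq c x (hθq x), sq]
  refine ⟨fun n hn => ?_, fun α hα => ?_, ?_⟩
  · rw [Set.ncard_eq_toFinset_card', Set.toFinset_ofPred,
      filter_congr fun x _ => minimalPeriod_eq_iff_orderOf_mem hf hθ hθq
        (scaledTrace_zero (by omega) c) (by omega) hn x,
      card_filter_orderOf_scaledTrace_mem hK hcF hc0 _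
        fun d hd => (Nat.mem_divisors.mp (mem_filter.mp hd).1).1]
  · obtain ⟨hd, hodd, hd1, hper⟩ := orderOf_spec_of_one_lt_minimalPeriod hf hθ hθq (by omega) hα
    exact ⟨_, hd, hodd, hd1, hper⟩
  · rw [Set.ncard_eq_toFinset_card', Set.toFinset_ofPred, filter_congr fun x _ => by rw [hf],
      card_filter_mul_scaledTrace_eq_self hK hcF hc0]

open scoped Classical in
/-- cycle structure of f(X) = c(X^{q+1} + X^2): for every n > 1 the
points of exact period n are counted by q·φ(d) summed over odd divisors d of q - 1
with ord_d(2) = n; every cycle length greater than 1 is ord_d(2) for such a d; and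
there are exactly q + 1 fixed points. -/
theorem stmt_14 (q s r : ℕ) (hq : Odd q) (hsr : q - 1 = 2 ^ s * r) (hr : Odd r)
    (K : Type*) [Field K] [Fintype K] (hK : Fintype.card K = q ^ 2)
    (c : K) (hcF : c ^ q = c) (hc0 : c ≠ 0) :
    (∀ n : ℕ, 1 < n →
      Set.ncard {α : K |
          Function.minimalPeriod (fun X : K => c * (X ^ (q + 1) + X ^ 2)) α = n} =
        ∑ d ∈ (q - 1).divisors.filter
            (fun d => Odd d ∧ orderOf ((2 : ZMod d)) = n),
          q * Nat.totient d) ∧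
    (∀ α : K,
      1 < Function.minimalPeriod (fun X : K => c * (X ^ (q + 1) + X ^ 2)) α →
      ∃ d : ℕ, d ∣ q - 1 ∧ Odd d ∧ 1 < d ∧
        Function.minimalPeriod (fun X : K => c * (X ^ (q + 1) + X ^ 2)) α =
          orderOf ((2 : ZMod d))) ∧
    Set.ncard {α : K | c * (α ^ (q + 1) + α ^ 2) = α} = q + 1 :=
  stmt_14_general q K hK c hcF hc0
end

section
/- Let q be odd, β with β^2 a nonsquare in F_q, c ∈ F_q^*, and f(X) = c(X^{q+1} + X^2). For α = u + vβ with u ≠ 0: f^{-1}(α) has exactly 2 elements if 2cu is a square in F_q, and is empty otherwise. -/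
/-!
Write `σ x = x ^ q` for the Frobenius involution of `𝔽_{q²}` over `𝔽_q`, so that
`f x = c (σ x · x + x²) = x · t(x)` with `t(x) = c (σ x + x) ∈ 𝔽_q`. Adding `f x = α` to its
conjugate gives `t(x)² = c (α + σ α) = 2cu`, so a preimage forces `2cu` to be a square in `𝔽_q`.
Conversely, if `t² = 2cu` with `t ∈ 𝔽_q`, then `x = α / t` solves `f x = α` and `t(x) = t`; since
`t(x) = ±t` for every solution and `f` is even, the preimage is exactly `{α / t, -(α / t)}`.
-/

open Function

theorem FiniteField.exists_ringHom_eq_pow (K : Type*) [Field K] [Fintype K] {q : ℕ}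
    (hq : q ∣ Fintype.card K) : ∃ σ : K →+* K, ∀ x, σ x = x ^ q := by
  obtain ⟨p, _⟩ := CharP.exists K
  obtain ⟨n, hp, hcard⟩ := FiniteField.card K p
  have := Fact.mk hp
  obtain ⟨m, -, rfl⟩ := (Nat.dvd_prime_pow hp).1 (hcard ▸ hq)
  exact ⟨iterateFrobenius K p m, fun _ => rfl⟩

section Involution

variable {K : Type*} [Field K] (σ : K →+* K) {c : K}

theorem RingHom.map_eq_neg_of_map_sq_eq {β : K} (hsq : σ (β ^ 2) = β ^ 2) (hne : σ β ≠ β) :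
    σ β = -β :=
  (sq_eq_sq_iff_eq_or_eq_neg.1 (by rw [← map_pow, hsq])).resolve_left hne

variable {σ}

theorem trace_sq_eq_of_mul_add_sq_eq (hσ : Involutive σ) (hc : σ c = c) {α x : K}
    (hx : c * (σ x * x + x ^ 2) = α) :
    σ (c * (σ x + x)) = c * (σ x + x) ∧ (c * (σ x + x)) ^ 2 = c * (α + σ α) := by
  refine ⟨by rw [map_mul, map_add, hσ, hc, add_comm], ?_⟩
  rw [← hx, map_mul, map_add, map_mul, map_pow, hσ, hc]
  ring

theorem setOf_mul_add_sq_eq_eq_empty (hσ : Involutive σ) (hc : σ c = c) {α : K}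
    (h : ¬ ∃ t, σ t = t ∧ t ^ 2 = c * (α + σ α)) :
    {x : K | c * (σ x * x + x ^ 2) = α} = ∅ :=
  Set.eq_empty_of_forall_notMem fun _ hx => h ⟨_, trace_sq_eq_of_mul_add_sq_eq hσ hc hx⟩

theorem setOf_mul_add_sq_eq_eq_pair (hσ : Involutive σ) (hc : σ c = c) {α t : K}
    (ht : σ t = t) (hsq : t ^ 2 = c * (α + σ α)) (ht0 : t ≠ 0) :
    {x : K | c * (σ x * x + x ^ 2) = α} = {α / t, -(α / t)} := by
  have hf : ∀ x, c * (σ x * x + x ^ 2) = x * (c * (σ x + x)) := fun x => by ring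
  ext x
  simp only [Set.mem_ofPred_eq, Set.mem_insert_iff, Set.mem_singleton_iff]
  constructor
  · intro hx
    have hs := (trace_sq_eq_of_mul_add_sq_eq hσ hc hx).2
    rw [hf] at hx
    rcases sq_eq_sq_iff_eq_or_eq_neg.1 (hs.trans hsq.symm) with hs | hs <;> rw [hs] at hx
    · exact .inl (eq_div_of_mul_eq ht0 hx)
    · exact .inr (by rw [← hx]; field_simp)
  · have hroot : c * (σ (α / t) * (α / t) + (α / t) ^ 2) = α := by
      have htr : c * (σ (α / t) + α / t) = t := by
        rw [map_div₀, ht, ← add_div, ← mul_div_assoc, add_comm, ← hsq]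
        field_simp
      rw [hf, htr, div_mul_cancel₀ _ ht0]
    rintro (rfl | rfl)
    · exact hroot
    · rwa [map_neg, neg_mul_neg, neg_sq]

theorem ncard_setOf_mul_add_sq_eq (hσ : Involutive σ) (hc : σ c = c) {α t : K}
    (ht : σ t = t) (hsq : t ^ 2 = c * (α + σ α)) (ht0 : t ≠ 0) (h2 : (2 : K) ≠ 0) :
    {x : K | c * (σ x * x + x ^ 2) = α}.ncard = 2 := by
  have hα : α ≠ 0 := by
    rintro rfl
    simp [ht0] at hsq
  rw [setOf_mul_add_sq_eq_eq_pair hσ hc ht hsq ht0, Set.ncard_pair]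
  intro h
  exact div_ne_zero hα ht0 <|
    (mul_eq_zero.1 (by linear_combination h : (2 : K) * (α / t) = 0)).resolve_left h2

end Involution

/-- for f(X) = c(X^{q+1} + X^2) and α = u + vβ with u ≠ 0, the
preimage f^{-1}(α) has exactly 2 elements if 2cu is a square in F_q, and is empty
otherwise. -/
theorem stmt_15 (q : ℕ) (hq : Odd q) (K : Type*) [Field K] [Fintype K]
    (hK : Fintype.card K = q ^ 2)
    (β : K) (hbF : (β ^ 2) ^ q = β ^ 2)
    (hbns : ¬ ∃ t : K, t ^ q = t ∧ t ^ 2 = β ^ 2)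
    (c : K) (hcF : c ^ q = c) (hc0 : c ≠ 0)
    (u v : K) (hu : u ^ q = u) (hv : v ^ q = v) (hu0 : u ≠ 0) :
    ((∃ t : K, t ^ q = t ∧ t ^ 2 = 2 * c * u) →
      Set.ncard {x : K | c * (x ^ (q + 1) + x ^ 2) = u + v * β} = 2) ∧
    ((¬ ∃ t : K, t ^ q = t ∧ t ^ 2 = 2 * c * u) →
      {x : K | c * (x ^ (q + 1) + x ^ 2) = u + v * β} = ∅) := by
  obtain ⟨σ, hσ⟩ := FiniteField.exists_ringHom_eq_pow K (hK ▸ dvd_pow_self q two_ne_zero)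
  have hinv : Involutive σ := fun x => by
    rw [hσ, hσ, ← pow_mul, ← sq, ← hK, FiniteField.pow_card]
  have h2 : (2 : K) ≠ 0 := Ring.two_ne_zero fun h => by
    simpa [hK, Nat.odd_iff.1 (hq.pow (n := 2))] using FiniteField.even_card_of_char_two h
  have hβ : σ β = -β := σ.map_eq_neg_of_map_sq_eq (by rw [hσ, hbF])
    fun h => hbns ⟨β, by rw [← hσ, h], rfl⟩
  have htr : c * (u + v * β + σ (u + v * β)) = 2 * c * u := by
    rw [map_add, map_mul, hσ u, hσ v, hu, hv, hβ]; ring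
  have hset : {x : K | c * (x ^ (q + 1) + x ^ 2) = u + v * β} =
      {x : K | c * (σ x * x + x ^ 2) = u + v * β} := by
    simp only [pow_succ, hσ]
  rw [hset]
  refine ⟨fun ⟨t, ht, hsq⟩ => ?_, fun h => ?_⟩
  · refine ncard_setOf_mul_add_sq_eq hinv (by rw [hσ, hcF]) (by rw [hσ, ht]) (hsq.trans htr.symm) ?_ h2
    rintro rfl
    simp [h2, hc0, hu0] at hsq
  · refine setOf_mul_add_sq_eq_eq_empty hinv (by rw [hσ, hcF]) fun ⟨t, ht, hsq⟩ => ?_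
    exact h ⟨t, by rwa [← hσ], hsq.trans htr⟩
end

section
/- Let q be odd, a ∈ F_q^* with a ≠ ±1, and f(X) = X^{q+1} + aX^2 on F_{q^2}. For α ∈ F_q^*: f^{-1}(α) has 0 elements if α(a-1) is a square and α(a+1) is a nonsquare in F_q; 4 elements if α(a-1) is a nonsquare and α(a+1) is a square; and 2 elements otherwise. -/
/-!
Applying the Frobenius `σ x = x ^ q` to `x ^ (q + 1) + a x ^ 2 = α` fixes `x ^ (q + 1)`, `a` and
`α`, so `a (x ^ q) ^ 2 = a x ^ 2` and `x ^ q = ± x`. The solutions with `x ∈ 𝔽_q` are the square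
roots of `α / (a + 1)` lying in `𝔽_q`, those with `x ^ q = -x` the square roots of `α / (a - 1)`
lying outside `𝔽_q`. Every element of `𝔽_q` is a square in `𝔽_{q²}`, and its two square roots
lie both in `𝔽_q` or both outside it, so the count is
`2 [α(a+1) square] + 2 [α(a-1) nonsquare]`.
-/

open Function Set

section SquareRoots

variable {K : Type*} [Field K] {P : K → Prop} {x c : K}

lemma exists_and_sq_eq_iff (hP : ∀ y, P (-y) ↔ P y) (hx : x ^ 2 = c) :
    (∃ y, P y ∧ y ^ 2 = c) ↔ P x := by
  refine ⟨fun ⟨y, hy, hy2⟩ => ?_, fun h => ⟨x, h, hx⟩⟩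
  rcases sq_eq_sq_iff_eq_or_eq_neg.mp (hy2.trans hx.symm) with rfl | rfl
  exacts [hy, (hP x).mp hy]

lemma finite_setOf_sq_eq (c : K) : {y : K | y ^ 2 = c}.Finite := by
  by_cases h : ∃ x, x ^ 2 = c
  · obtain ⟨x, rfl⟩ := h
    exact (toFinite {x, -x}).subset fun y hy => sq_eq_sq_iff_eq_or_eq_neg.mp hy
  · exact finite_empty.subset fun y hy => h ⟨y, hy⟩

open scoped Classical in
lemma ncard_setOf_and_sq_eq (hK : ringChar K ≠ 2) (hP : ∀ y, P (-y) ↔ P y) (hx : x ^ 2 = c)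
    (hx0 : x ≠ 0) : {y | P y ∧ y ^ 2 = c}.ncard = if P x then 2 else 0 := by
  have hroots : ∀ y, y ^ 2 = c ↔ y = x ∨ y = -x := fun y => by
    rw [← hx, sq_eq_sq_iff_eq_or_eq_neg]
  split_ifs with h
  · have hset : {y | P y ∧ y ^ 2 = c} = {x, -x} := by
      ext y
      simp only [mem_ofPred_eq, hroots, mem_insert_iff, mem_singleton_iff]
      refine ⟨And.right, ?_⟩
      rintro (rfl | rfl)
      exacts [⟨h, .inl rfl⟩, ⟨(hP x).mpr h, .inr rfl⟩]
    rw [hset, ncard_pair]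
    exact fun hneg => hx0 ((Ring.eq_self_iff_eq_zero_of_char_ne_two hK).mp hneg.symm)
  · have hset : {y | P y ∧ y ^ 2 = c} = ∅ := by
      ext y
      simp only [mem_ofPred_eq, hroots, mem_empty_iff_false, iff_false, not_and]
      rintro hy (rfl | rfl)
      exacts [h hy, h ((hP x).mp hy)]
    rw [hset, ncard_empty]

end SquareRoots

section Involution

variable {K : Type*} [Field K] (σ : K →+* K)

lemma exists_fixed_sq_eq_mul_iff {α s : K} (hs : σ s = s) (hs0 : s ≠ 0) :
    (∃ t, σ t = t ∧ t ^ 2 = α * s) ↔ ∃ t, σ t = t ∧ t ^ 2 = α / s := by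
  constructor
  · rintro ⟨t, ht, ht2⟩
    exact ⟨t / s, by rw [map_div₀, ht, hs], by rw [div_pow, ht2]; field_simp⟩
  · rintro ⟨t, ht, ht2⟩
    exact ⟨t * s, by rw [map_mul, ht, hs], by rw [mul_pow, ht2]; field_simp⟩

open scoped Classical in
lemma ncard_fixed_sqrt (hK : ringChar K ≠ 2) {c : K} (hc : IsSquare c) (hc0 : c ≠ 0) :
    {y | σ y = y ∧ y ^ 2 = c}.ncard = if ∃ t, σ t = t ∧ t ^ 2 = c then 2 else 0 := by
  obtain ⟨x, rfl⟩ := hc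
  have hP : ∀ y, σ (-y) = -y ↔ σ y = y := by simp
  rw [ncard_setOf_and_sq_eq hK hP (sq x) (by rintro rfl; simp at hc0),
    exists_and_sq_eq_iff hP (sq x)]

open scoped Classical in
lemma ncard_antifixed_sqrt (hK : ringChar K ≠ 2) {c : K} (hcσ : σ c = c) (hc : IsSquare c)
    (hc0 : c ≠ 0) :
    {y | σ y = -y ∧ y ^ 2 = c}.ncard = if ∃ t, σ t = t ∧ t ^ 2 = c then 0 else 2 := by
  obtain ⟨x, rfl⟩ := hc
  have hx0 : x ≠ 0 := by rintro rfl; simp at hc0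
  rw [ncard_setOf_and_sq_eq hK (by simp [neg_eq_iff_eq_neg]) (sq x) hx0,
    exists_and_sq_eq_iff (by simp) (sq x)]
  have hσx : σ x = x ∨ σ x = -x := sq_eq_sq_iff_eq_or_eq_neg.mp (by rw [← map_pow, sq, hcσ])
  have hx_ne : x ≠ -x := fun h => hx0 ((Ring.eq_self_iff_eq_zero_of_char_ne_two hK).mp h.symm)
  rcases hσx with h | h
  · simp [h, hx_ne]
  · simp [h, hx_ne.symm]

lemma setOf_map_mul_add_mul_sq_eq (hσ : Involutive σ) {a α : K} (ha : σ a = a) (ha0 : a ≠ 0)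
    (hα : σ α = α) :
    {x | σ x * x + a * x ^ 2 = α} =
      {y | σ y = y ∧ y ^ 2 * (a + 1) = α} ∪ {y | σ y = -y ∧ y ^ 2 * (a - 1) = α} := by
  ext x
  simp only [mem_ofPred_eq, mem_union]
  constructor
  · intro h
    have hconj : x * σ x + a * σ x ^ 2 = α := by
      simpa only [map_add, map_mul, map_pow, hσ x, ha, hα] using congrArg σ h
    have hsq : σ x ^ 2 = x ^ 2 := mul_left_cancel₀ ha0 (by linear_combination hconj - h)
    rcases sq_eq_sq_iff_eq_or_eq_neg.mp hsq with hx | hx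
    · exact .inl ⟨hx, by rw [hx] at h; linear_combination h⟩
    · exact .inr ⟨hx, by rw [hx] at h; linear_combination h⟩
  · rintro (⟨hx, h⟩ | ⟨hx, h⟩) <;> rw [hx] <;> linear_combination h

open scoped Classical in
theorem ncard_setOf_map_mul_add_mul_sq_eq (hK : ringChar K ≠ 2) (hσ : Involutive σ)
    (hsq : ∀ c, σ c = c → IsSquare c) {a α : K} (ha : σ a = a) (ha0 : a ≠ 0) (ha1 : a ≠ 1)
    (ha2 : a ≠ -1) (hα : σ α = α) (hα0 : α ≠ 0) :
    {x | σ x * x + a * x ^ 2 = α}.ncard =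
      (if ∃ t, σ t = t ∧ t ^ 2 = α * (a + 1) then 2 else 0) +
        if ∃ t, σ t = t ∧ t ^ 2 = α * (a - 1) then 0 else 2 := by
  have hsucc : a + 1 ≠ 0 := fun h => ha2 (eq_neg_of_add_eq_zero_left h)
  have hpred : a - 1 ≠ 0 := sub_ne_zero.mpr ha1
  have hσsucc : σ (a + 1) = a + 1 := by rw [map_add, ha, map_one]
  have hσpred : σ (a - 1) = a - 1 := by rw [map_sub, ha, map_one]
  rw [setOf_map_mul_add_mul_sq_eq σ hσ ha ha0 hα]
  simp_rw [← eq_div_iff hsucc, ← eq_div_iff hpred]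
  have hdisj :
      Disjoint {y | σ y = y ∧ y ^ 2 = α / (a + 1)} {y | σ y = -y ∧ y ^ 2 = α / (a - 1)} := by
    refine disjoint_left.mpr fun y ⟨hy, hy2⟩ ⟨hy', _⟩ => div_ne_zero hα0 hsucc ?_
    have : y = 0 := (Ring.eq_self_iff_eq_zero_of_char_ne_two hK).mp (hy'.symm.trans hy)
    rw [← hy2, this, sq, zero_mul]
  rw [ncard_union_eq hdisj ((finite_setOf_sq_eq _).subset fun _ => And.right)
    ((finite_setOf_sq_eq _).subset fun _ => And.right)]
  have hσc_succ : σ (α / (a + 1)) = α / (a + 1) := by rw [map_div₀, hα, hσsucc]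
  have hσc_pred : σ (α / (a - 1)) = α / (a - 1) := by rw [map_div₀, hα, hσpred]
  rw [ncard_fixed_sqrt σ hK (hsq _ hσc_succ) (div_ne_zero hα0 hsucc),
    ncard_antifixed_sqrt σ hK hσc_pred (hsq _ hσc_pred) (div_ne_zero hα0 hpred),
    exists_fixed_sq_eq_mul_iff σ hσsucc hsucc, exists_fixed_sq_eq_mul_iff σ hσpred hpred]

end Involution

section FiniteField

variable {K : Type*} [Field K] [Fintype K] {q : ℕ}

lemma ringChar_ne_two_of_odd_card (h : Odd (Fintype.card K)) : ringChar K ≠ 2 := fun h2 => by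
  have := FiniteField.even_card_iff_char_two.mp h2
  rw [Nat.odd_iff] at h
  omega

lemma exists_ringHom_eq_pow_of_card_eq_pow {n : ℕ} (hn : n ≠ 0) (hK : Fintype.card K = q ^ n) :
    ∃ σ : K →+* K, ∀ x, σ x = x ^ q := by
  obtain ⟨p, hchar⟩ := CharP.exists K
  obtain ⟨m, hp, hcard⟩ := FiniteField.card K p
  have : Fact p.Prime := ⟨hp⟩
  have hdvd : q ∣ p ^ (m : ℕ) := hcard ▸ hK ▸ dvd_pow_self q hn
  obtain ⟨k, -, rfl⟩ := (Nat.dvd_prime_pow hp).mp hdvd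
  exact ⟨iterateFrobenius K p k, fun x => iterateFrobenius_def p k x⟩

lemma isSquare_of_pow_eq_self (hq : Odd q) (hK : Fintype.card K = q ^ 2) {c : K}
    (hc : c ^ q = c) : IsSquare c := by
  rcases eq_or_ne c 0 with rfl | hc0
  · exact IsSquare.zero
  have hK2 : ringChar K ≠ 2 := ringChar_ne_two_of_odd_card (hK ▸ hq.pow)
  obtain ⟨r, rfl⟩ := hq
  have hc1 : c ^ (2 * r) = 1 := by
    refine mul_right_cancel₀ hc0 ?_
    rw [one_mul, ← pow_succ, hc]
  -- `#K / 2 = (q - 1)(q + 1) / 2` is a multiple of `q - 1 = 2 r`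
  have hhalf : (2 * r + 1) ^ 2 / 2 = 2 * r * (r + 1) := by
    have : (2 * r + 1) ^ 2 = 2 * (2 * r * (r + 1)) + 1 := by ring
    omega
  rw [FiniteField.isSquare_iff hK2 hc0, hK, hhalf, pow_mul, hc1, one_pow]

end FiniteField

/-- for f(X) = X^{q+1} + aX^2, a ∈ F_q^* \ {±1}, and α ∈ F_q^*, the
preimage f^{-1}(α) has 0 elements if α(a-1) is a square and α(a+1) a nonsquare in
F_q; 4 elements if α(a-1) is a nonsquare and α(a+1) a square; and 2 otherwise. -/
theorem stmt_18 (q : ℕ) (hq : Odd q) (K : Type*) [Field K] [Fintype K]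
    (hK : Fintype.card K = q ^ 2)
    (a : K) (haF : a ^ q = a) (ha0 : a ≠ 0) (ha1 : a ≠ 1) (ha2 : a ≠ -1)
    (α : K) (hαF : α ^ q = α) (hα0 : α ≠ 0) :
    (((∃ t : K, t ^ q = t ∧ t ^ 2 = α * (a - 1)) ∧
        ¬ (∃ t : K, t ^ q = t ∧ t ^ 2 = α * (a + 1))) →
      Set.ncard {x : K | x ^ (q + 1) + a * x ^ 2 = α} = 0) ∧
    ((¬ (∃ t : K, t ^ q = t ∧ t ^ 2 = α * (a - 1)) ∧
        (∃ t : K, t ^ q = t ∧ t ^ 2 = α * (a + 1))) →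
      Set.ncard {x : K | x ^ (q + 1) + a * x ^ 2 = α} = 4) ∧
    ((((∃ t : K, t ^ q = t ∧ t ^ 2 = α * (a - 1)) ↔
        (∃ t : K, t ^ q = t ∧ t ^ 2 = α * (a + 1)))) →
      Set.ncard {x : K | x ^ (q + 1) + a * x ^ 2 = α} = 2) := by
  have hK2 : ringChar K ≠ 2 := ringChar_ne_two_of_odd_card (hK ▸ hq.pow)
  obtain ⟨σ, hσ⟩ := exists_ringHom_eq_pow_of_card_eq_pow two_ne_zero hK
  have hinv : Involutive σ := fun x => by
    rw [hσ, hσ, ← pow_mul, ← sq, ← hK, FiniteField.pow_card]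
  have hsq : ∀ c, σ c = c → IsSquare c := fun c hc =>
    isSquare_of_pow_eq_self hq hK (hσ c ▸ hc)
  have hset : {x : K | x ^ (q + 1) + a * x ^ 2 = α} = {x | σ x * x + a * x ^ 2 = α} := by
    simp only [pow_succ, hσ]
  rw [hset]
  simp only [← hσ] at haF hαF ⊢
  rw [ncard_setOf_map_mul_add_mul_sq_eq σ hK2 hinv hsq haF ha0 ha1 ha2 hαF hα0]
  by_cases hsucc : ∃ t, σ t = t ∧ t ^ 2 = α * (a + 1) <;>
    by_cases hpred : ∃ t, σ t = t ∧ t ^ 2 = α * (a - 1) <;> simp [hsucc, hpred]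
end
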